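/- arXiv:1101.2995 — 3 statements merged into one kernel-verified Lean document; each statement's English description precedes it below -/
import Mathlib

section
/- Let f be a holomorphic Bloch function on the unit disk D, i.e., sup_{z∈D}(1-|z|²)|f'(z)| < ∞. Define the measure dμ(z) = (1-|z|²)|f'(z)|² dA(z). Then μ is a 1-Carleson measure: for every 0 < r < 1 there exists C > 0 such that μ(D(z,r)) ≤ C(1-|z|²) for all z ∈ D. -/
open MeasureTheory Complex

def unitDisk : Set ℂ := {z : ℂ | ‖z‖ < 1}

def pDisk (z : ℂ) (r : ℝ) : Set ℂ :=
  {w ∈ unitDisk | ‖(z - w) / (1 - z * (starRingEnd ℂ) w)‖ < r}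

noncomputable def areaM : Measure ℂ := (ENNReal.ofReal Real.pi)⁻¹ • (volume : Measure ℂ)

lemma keyId (z w : ℂ) :
    Complex.normSq (1 - z * (starRingEnd ℂ) w) - Complex.normSq (z - w)
      = (1 - Complex.normSq z) * (1 - Complex.normSq w) := by
  simp only [Complex.normSq_apply, Complex.sub_re, Complex.sub_im, Complex.mul_re,
    Complex.mul_im, Complex.one_re, Complex.one_im, Complex.conj_re, Complex.conj_im]
  ring


set_option maxHeartbeats 1000000

theorem stmt5 (f : ℂ → ℂ) (hf : DifferentiableOn ℂ f unitDisk)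
    (M : ℝ) (hBloch : ∀ z ∈ unitDisk, (1 - ‖z‖ ^ 2) * ‖deriv f z‖ ≤ M)
    (μ : Measure ℂ)
    (hμ : μ = (areaM.restrict unitDisk).withDensity
      (fun z => ENNReal.ofReal ((1 - ‖z‖ ^ 2) * ‖deriv f z‖ ^ 2)))
    (r : ℝ) (hr0 : 0 < r) (hr1 : r < 1) :
    ∃ C : ℝ, 0 < C ∧ ∀ z ∈ unitDisk, μ (pDisk z r) ≤ ENNReal.ofReal (C * (1 - ‖z‖ ^ 2)) := by
  have hr2 : (0:ℝ) < 1 - r ^ 2 := by nlinarith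
  have hr3 : (0:ℝ) < 1 - r := by linarith
  refine ⟨4 * M ^ 2 * r ^ 2 / ((1 - r ^ 2) * (1 - r) ^ 2) + 1, by positivity, ?_⟩
  intro z hz
  have hz1 : ‖z‖ < 1 := hz
  set s : ℝ := 1 - ‖z‖ ^ 2 with hs
  have hs0 : 0 < s := by have := norm_nonneg z; nlinarith
  -- basic facts about points of pDisk z r
  have hsub : ∀ w ∈ pDisk z r, ‖z - w‖ < r * ‖1 - z * (starRingEnd ℂ) w‖ := by
    intro w hw
    obtain ⟨hw1, hw2⟩ := hw
    have hw1' : ‖w‖ < 1 := hw1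
    have hd : 0 < ‖(1:ℂ) - z * (starRingEnd ℂ) w‖ := by
      have h1 : ‖z * (starRingEnd ℂ) w‖ < 1 := by
        rw [norm_mul, RCLike.norm_conj]
        nlinarith [norm_nonneg z, norm_nonneg w]
      have h2 := norm_sub_norm_le (1 : ℂ) (z * (starRingEnd ℂ) w)
      simp only [norm_one] at h2
      linarith
    rw [norm_div, div_lt_iff₀ hd] at hw2
    exact hw2
  have hlow : ∀ w ∈ pDisk z r, (1 - r ^ 2) * s / 4 ≤ 1 - ‖w‖ ^ 2 := by
    intro w hw
    have hw1 : ‖w‖ < 1 := hw.1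
    have h1 := hsub w hw
    have hid := keyId z w
    rw [Complex.normSq_eq_norm_sq, Complex.normSq_eq_norm_sq, Complex.normSq_eq_norm_sq, Complex.normSq_eq_norm_sq] at hid
    set a : ℝ := ‖(1:ℂ) - z * (starRingEnd ℂ) w‖ with ha
    have ha2 : s / 2 ≤ a := by
      have h2 : ‖z * (starRingEnd ℂ) w‖ ≤ ‖z‖ := by
        rw [norm_mul, RCLike.norm_conj]
        nlinarith [norm_nonneg z, norm_nonneg w]
      have h3 := norm_sub_norm_le (1 : ℂ) (z * (starRingEnd ℂ) w)
      simp only [norm_one] at h3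
      have : 1 - ‖z‖ ≤ a := by linarith
      nlinarith [norm_nonneg z]
    -- s * (1 - ‖w‖^2) = a^2 - ‖z-w‖^2 > (1-r^2) a^2 ≥ (1-r^2) (s/2)^2
    have key : s * (1 - ‖w‖ ^ 2) ≥ (1 - r ^ 2) * (s / 2) ^ 2 := by
      have hzw2 : ‖z - w‖ * ‖z - w‖ < (r * a) * (r * a) :=
        mul_self_lt_mul_self (norm_nonneg _) h1
      have haa : (s / 2) * (s / 2) ≤ a * a := mul_self_le_mul_self (by positivity) ha2
      nlinarith [mul_le_mul_of_nonneg_left haa hr2.le]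
    nlinarith
  -- Euclidean containment
  set R : ℝ := r / (1 - r) * s with hR
  have hR0 : 0 ≤ R := by positivity
  have hball : pDisk z r ⊆ Metric.ball z R := by
    intro w hw
    have h1 := hsub w hw
    have h2 : ‖(1:ℂ) - z * (starRingEnd ℂ) w‖ ≤ s + ‖z - w‖ := by
      have hdecomp : (1:ℂ) - z * (starRingEnd ℂ) w
          = (1 - z * (starRingEnd ℂ) z) + z * ((starRingEnd ℂ) z - (starRingEnd ℂ) w) := by
        ring
      have hzz : (1:ℂ) - z * (starRingEnd ℂ) z = ((1 - ‖z‖ ^ 2 : ℝ) : ℂ) := by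
        rw [Complex.mul_conj]
        rw [Complex.normSq_eq_norm_sq]
        push_cast
        ring
      calc ‖(1:ℂ) - z * (starRingEnd ℂ) w‖
          ≤ ‖(1:ℂ) - z * (starRingEnd ℂ) z‖ + ‖z * ((starRingEnd ℂ) z - (starRingEnd ℂ) w)‖ := by
            rw [hdecomp]; exact norm_add_le _ _
        _ ≤ s + ‖z - w‖ := by
            have e1 : ‖(1:ℂ) - z * (starRingEnd ℂ) z‖ = s := by
              rw [hzz, Complex.norm_real, Real.norm_eq_abs, abs_of_pos hs0]
            have e2 : ‖z * ((starRingEnd ℂ) z - (starRingEnd ℂ) w)‖ ≤ ‖z - w‖ := by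
              rw [norm_mul, ← map_sub, RCLike.norm_conj]
              nlinarith [norm_nonneg (z - w)]
            linarith
    have h3 : ‖z - w‖ < R := by
      have : ‖z - w‖ < r * (s + ‖z - w‖) := lt_of_lt_of_le h1 (by nlinarith)
      rw [hR, div_mul_eq_mul_div, lt_div_iff₀ hr3]
      nlinarith
    rw [Metric.mem_ball, dist_eq_norm, ← norm_neg]
    simpa [neg_sub] using h3
  -- measurability
  have hmeasU : MeasurableSet unitDisk := by
    have : unitDisk = (fun w : ℂ => ‖w‖) ⁻¹' (Set.Iio 1) := rfl
    rw [this]; exact measurable_norm measurableSet_Iio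
  have hmeas : MeasurableSet (pDisk z r) := by
    have h2 : Measurable fun w : ℂ => ‖(z - w) / (1 - z * (starRingEnd ℂ) w)‖ := by
      apply Measurable.norm
      exact (measurable_const.sub measurable_id).div
        (measurable_const.sub (measurable_const.mul (RCLike.continuous_conj.measurable)))
    exact hmeasU.inter (measurableSet_lt h2 measurable_const)
  have hsubU : pDisk z r ⊆ unitDisk := fun w hw => hw.1
  -- compute the measure
  set B : ℝ := 4 * M ^ 2 / ((1 - r ^ 2) * s) with hB
  have hM0 : 0 ≤ M := by
    have h0 := hBloch 0 (by simp [unitDisk])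
    simp only [norm_zero] at h0
    nlinarith [norm_nonneg (deriv f 0)]
  have hptwise : ∀ w ∈ pDisk z r,
      ENNReal.ofReal ((1 - ‖w‖ ^ 2) * ‖deriv f w‖ ^ 2) ≤ ENNReal.ofReal B := by
    intro w hw
    apply ENNReal.ofReal_le_ofReal
    have ht0 : 0 < 1 - ‖w‖ ^ 2 := lt_of_lt_of_le (by positivity) (hlow w hw)
    have h1 : (1 - ‖w‖ ^ 2) * ‖deriv f w‖ ≤ M := hBloch w hw.1
    have h2 : (1 - ‖w‖ ^ 2) * ‖deriv f w‖ ^ 2 ≤ M ^ 2 / (1 - ‖w‖ ^ 2) := by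
      rw [le_div_iff₀ ht0]
      nlinarith [mul_self_le_mul_self (mul_nonneg ht0.le (norm_nonneg (deriv f w))) h1]
    have h3 : M ^ 2 / (1 - ‖w‖ ^ 2) ≤ B := by
      rw [hB, div_le_div_iff₀ ht0 (by positivity)]
      have h4 := mul_le_mul_of_nonneg_left (hlow w hw) (sq_nonneg M)
      clear_value s
      linarith
    linarith
  have harea : areaM (Metric.ball z R) = ENNReal.ofReal (R ^ 2) := by
    rw [areaM, Measure.smul_apply, smul_eq_mul, Complex.volume_ball]
    rw [← ENNReal.ofReal_pow hR0, ← NNReal.coe_real_pi, ENNReal.ofReal_coe_nnreal]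
    rw [mul_comm (ENNReal.ofReal (R ^ 2)) _, ← mul_assoc,
      ENNReal.inv_mul_cancel (by simp [NNReal.pi_ne_zero]) ENNReal.coe_ne_top, one_mul]
  calc μ (pDisk z r) = ∫⁻ w in pDisk z r, ENNReal.ofReal ((1 - ‖w‖ ^ 2) * ‖deriv f w‖ ^ 2)
        ∂(areaM.restrict unitDisk) := by
        rw [hμ, withDensity_apply _ hmeas]
    _ = ∫⁻ w in pDisk z r, ENNReal.ofReal ((1 - ‖w‖ ^ 2) * ‖deriv f w‖ ^ 2) ∂areaM := by
        rw [Measure.restrict_restrict hmeas, Set.inter_eq_self_of_subset_left hsubU]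
    _ ≤ ∫⁻ _ in pDisk z r, ENNReal.ofReal B ∂areaM := setLIntegral_mono measurable_const hptwise
    _ = ENNReal.ofReal B * areaM (pDisk z r) := setLIntegral_const _ _
    _ ≤ ENNReal.ofReal B * ENNReal.ofReal (R ^ 2) := by
        rw [← harea]
        exact mul_le_mul_right (measure_mono hball) _
    _ = ENNReal.ofReal (B * R ^ 2) := by
        rw [ENNReal.ofReal_mul (by positivity)]
    _ ≤ ENNReal.ofReal ((4 * M ^ 2 * r ^ 2 / ((1 - r ^ 2) * (1 - r) ^ 2) + 1) * s) := by
        apply ENNReal.ofReal_le_ofReal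
        have heq : B * R ^ 2 = 4 * M ^ 2 * r ^ 2 / ((1 - r ^ 2) * (1 - r) ^ 2) * s := by
          rw [hB, hR]
          field_simp
        rw [heq]
        have hC0 : 0 ≤ 4 * M ^ 2 * r ^ 2 / ((1 - r ^ 2) * (1 - r) ^ 2) := by positivity
        nlinarith
end

section
/- Let α > 0, 0 < p ≤ 1, {z_k} a sequence in ℂⁿ, and {c_k} ∈ l^p. Then f(z) = Σ_k c_k exp(α⟨z,z_k⟩ - (α/2)|z_k|²) converges locally uniformly, defines an entire function, and ∫_{ℂⁿ} |f(z)e^{-α|z|²/2}|^p dv(z) ≤ C Σ_k |c_k|^p for a constant C = C(p,α,n). -/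
open MeasureTheory Complex Filter

noncomputable instance (n : ℕ) : MeasurableSpace (EuclideanSpace ℂ (Fin n)) := borel _
instance (n : ℕ) : BorelSpace (EuclideanSpace ℂ (Fin n)) := ⟨rfl⟩

/-- Lebesgue volume measure on ℂⁿ. -/
noncomputable def volCn (n : ℕ) : Measure (EuclideanSpace ℂ (Fin n)) :=
  Measure.map (⇑(EuclideanSpace.equiv (Fin n) ℂ).symm) (volume : Measure (Fin n → ℂ))

/-! ### Auxiliary lemmas -/

lemma aux_integrable_gauss (b : ℝ) (hb : 0 < b) (c : ℂ) :
    Integrable (fun v : ℂ => Real.exp (-b * ‖v - c‖ ^ 2)) := by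
  have h : Integrable (fun v : ℂ => Real.exp (-b * ‖v‖ ^ 2)) := by
    have h := (GaussianFourier.integrable_cexp_neg_mul_sq_norm_add (b := (b : ℂ))
      (by simpa using hb) 0 (0 : ℂ)).norm
    refine h.congr (Filter.Eventually.of_forall fun v => ?_)
    simp only [Complex.norm_exp]
    norm_num [← Complex.ofReal_pow]
  exact h.comp_sub_right c

lemma aux_integral_gauss (b : ℝ) (hb : 0 < b) (c : ℂ) :
    ∫ v : ℂ, Real.exp (-b * ‖v - c‖ ^ 2) = Real.pi / b := by
  rw [integral_sub_right_eq_self (fun v : ℂ => Real.exp (-b * ‖v‖ ^ 2)) c,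
    GaussianFourier.integral_rexp_neg_mul_sq_norm hb]
  norm_num [Complex.finrank_real_complex]

lemma aux_gaussN (n : ℕ) (b : ℝ) (hb : 0 < b) (w : EuclideanSpace ℂ (Fin n)) :
    ∫⁻ z, ENNReal.ofReal (Real.exp (-b * ‖z - w‖ ^ 2)) ∂(volCn n)
      = ENNReal.ofReal ((Real.pi / b) ^ n) := by
  have hcont : Continuous fun z : EuclideanSpace ℂ (Fin n) => Real.exp (-b * ‖z - w‖ ^ 2) :=
    Real.continuous_exp.comp (continuous_const.mul ((continuous_id.sub continuous_const).norm.pow 2))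
  have hmeas : Measurable fun z : EuclideanSpace ℂ (Fin n) =>
      ENNReal.ofReal (Real.exp (-b * ‖z - w‖ ^ 2)) :=
    ENNReal.measurable_ofReal.comp hcont.measurable
  have hme : Measurable (⇑(EuclideanSpace.equiv (Fin n) ℂ).symm) :=
    (EuclideanSpace.equiv (Fin n) ℂ).symm.continuous.measurable
  rw [volCn, lintegral_map hmeas hme]
  have hpt : ∀ x : Fin n → ℂ,
      Real.exp (-b * ‖(EuclideanSpace.equiv (Fin n) ℂ).symm x - w‖ ^ 2)
        = ∏ i, Real.exp (-b * ‖x i - w i‖ ^ 2) := by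
    intro x
    rw [← Real.exp_sum]
    congr 1
    rw [EuclideanSpace.norm_eq, Real.sq_sqrt (by positivity), Finset.mul_sum]
    rfl
  simp_rw [hpt]
  have hInt : Integrable (fun x : Fin n → ℂ => ∏ i, Real.exp (-b * ‖x i - w i‖ ^ 2)) :=
    Integrable.fintype_prod (f := fun i (ζ : ℂ) => Real.exp (-b * ‖ζ - w i‖ ^ 2))
      (fun i => aux_integrable_gauss b hb (w i))
  rw [← ofReal_integral_eq_lintegral_ofReal hInt
    (Filter.Eventually.of_forall fun x => Finset.prod_nonneg fun i _ => (Real.exp_pos _).le)]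
  congr 1
  rw [volume_pi, integral_fintype_prod_eq_prod (f := fun i (ζ : ℂ) => Real.exp (-b * ‖ζ - w i‖ ^ 2))]
  rw [Finset.prod_congr rfl (fun i _ => aux_integral_gauss b hb (w i)), Finset.prod_const]
  simp

lemma aux_rpow_add_le {p : ℝ} (hp0 : 0 < p) (hp1 : p ≤ 1) {x y : ℝ} (hx : 0 ≤ x) (hy : 0 ≤ y) :
    (x + y) ^ p ≤ x ^ p + y ^ p := by
  have h := NNReal.rpow_add_le_add_rpow (x.toNNReal) (y.toNNReal) hp0.le hp1
  have := (NNReal.coe_le_coe).2 h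
  push_cast at this
  rwa [Real.coe_toNNReal _ hx, Real.coe_toNNReal _ hy] at this

lemma aux_sum_rpow_le {p : ℝ} (hp0 : 0 < p) (hp1 : p ≤ 1) (a : ℕ → ℝ) (ha : ∀ i, 0 ≤ a i)
    (s : Finset ℕ) : (∑ i ∈ s, a i) ^ p ≤ ∑ i ∈ s, a i ^ p := by
  classical
  induction s using Finset.induction with
  | empty => simp [Real.zero_rpow hp0.ne']
  | @insert j t hj ih =>
      rw [Finset.sum_insert hj, Finset.sum_insert hj]
      exact (aux_rpow_add_le hp0 hp1 (ha j) (Finset.sum_nonneg fun i _ => ha i)).trans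
        (add_le_add_right ih _)

lemma aux_tsum_rpow_le {p : ℝ} (hp0 : 0 < p) (hp1 : p ≤ 1) (a : ℕ → ℝ) (ha : ∀ i, 0 ≤ a i)
    (hsum : Summable a) (hsump : Summable fun i => a i ^ p) :
    (∑' i, a i) ^ p ≤ ∑' i, a i ^ p := by
  refine le_of_tendsto (hsum.hasSum.tendsto_sum_nat.rpow_const (Or.inr hp0.le)) ?_
  filter_upwards with N
  exact (aux_sum_rpow_le hp0 hp1 a ha _).trans
    (hsump.sum_le_tsum _ (fun i _ => Real.rpow_nonneg (ha i) p))

lemma aux_abs_exp_bound (α : ℝ) (hα : 0 < α) (s : ℝ) :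
    |s| * Real.exp (-(α / 2) * s ^ 2) ≤ 1 + 2 / α := by
  have h2α : 0 ≤ 2 / α := by positivity
  rcases le_or_gt (|s|) 1 with h | h
  · have he : Real.exp (-(α / 2) * s ^ 2) ≤ 1 := by
      rw [Real.exp_le_one_iff]
      nlinarith [sq_nonneg s]
    nlinarith [abs_nonneg s, Real.exp_pos (-(α / 2) * s ^ 2)]
  · have hs2 : (1 : ℝ) ≤ s ^ 2 := by nlinarith [_root_.sq_abs s]
    have hG : |s| ≤ s ^ 2 := by nlinarith [_root_.sq_abs s, abs_nonneg s]
    have h1 : α / 2 * s ^ 2 ≤ Real.exp (α / 2 * s ^ 2) := by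
      nlinarith [Real.add_one_le_exp (α / 2 * s ^ 2)]
    have hE : Real.exp (-(α / 2) * s ^ 2) * Real.exp (α / 2 * s ^ 2) = 1 := by
      rw [← Real.exp_add]; norm_num
    have hEpos : 0 < Real.exp (-(α / 2) * s ^ 2) := Real.exp_pos _
    have hF : Real.exp (-(α / 2) * s ^ 2) * (α / 2 * s ^ 2) ≤ 1 := by
      calc Real.exp (-(α / 2) * s ^ 2) * (α / 2 * s ^ 2)
          ≤ Real.exp (-(α / 2) * s ^ 2) * Real.exp (α / 2 * s ^ 2) :=
            mul_le_mul_of_nonneg_left h1 hEpos.le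
        _ = 1 := hE
    have hA : α * (2 / α) = 2 := by field_simp
    nlinarith [mul_le_mul_of_nonneg_left hG (mul_pos hα hEpos).le, hF, hA, hα,
      mul_pos hα hEpos]

lemma aux_deriv_bound (α R t : ℝ) (hα : 0 < α) (hR : 0 ≤ R) (ht : 0 ≤ t) :
    t * Real.exp (α * R * t - α / 2 * t ^ 2)
      ≤ (R + 1 + 2 / α) * Real.exp (α * R ^ 2 / 2) := by
  have e1 : α * R * t - α / 2 * t ^ 2 = α * R ^ 2 / 2 + -(α / 2) * (t - R) ^ 2 := by ring
  rw [e1, Real.exp_add]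
  have key := aux_abs_exp_bound α hα (t - R)
  have he1 : Real.exp (-(α / 2) * (t - R) ^ 2) ≤ 1 := by
    rw [Real.exp_le_one_iff]; nlinarith [sq_nonneg (t - R)]
  have habs : t - R ≤ |t - R| := le_abs_self _
  have hts : t * Real.exp (-(α / 2) * (t - R) ^ 2) ≤ R + 1 + 2 / α := by
    have hepos := (Real.exp_pos (-(α / 2) * (t - R) ^ 2)).le
    nlinarith [mul_le_mul_of_nonneg_right habs hepos, abs_nonneg (t - R),
      mul_le_mul_of_nonneg_left he1 hR]
  calc t * (Real.exp (α * R ^ 2 / 2) * Real.exp (-(α / 2) * (t - R) ^ 2))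
      = (t * Real.exp (-(α / 2) * (t - R) ^ 2)) * Real.exp (α * R ^ 2 / 2) := by ring
    _ ≤ (R + 1 + 2 / α) * Real.exp (α * R ^ 2 / 2) :=
        mul_le_mul_of_nonneg_right hts (Real.exp_pos _).le

set_option maxHeartbeats 1000000 in
set_option synthInstance.maxHeartbeats 1000000 in
theorem stmt14 (n : ℕ) (α : ℝ) (hα : 0 < α) (p : ℝ) (hp0 : 0 < p) (hp1 : p ≤ 1) :
    ∃ C : ℝ, 0 < C ∧
      ∀ (c : ℕ → ℂ) (zk : ℕ → EuclideanSpace ℂ (Fin n)),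
        Summable (fun k => ‖c k‖ ^ p) →
        ∀ f : EuclideanSpace ℂ (Fin n) → ℂ,
          (∀ z, f z = ∑' k,
            c k * Complex.exp ((α : ℂ) * (inner ℂ (zk k) z : ℂ) - (α / 2 : ℝ) * ‖zk k‖ ^ 2)) →
          TendstoLocallyUniformly
            (fun (N : ℕ) (z : EuclideanSpace ℂ (Fin n)) =>
              ∑ k ∈ Finset.range N,
                c k * Complex.exp ((α : ℂ) * (inner ℂ (zk k) z : ℂ) - (α / 2 : ℝ) * ‖zk k‖ ^ 2))
            f atTop ∧
          Differentiable ℂ f ∧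
          (∫⁻ z, ENNReal.ofReal ((‖f z‖ * Real.exp (-(α / 2) * ‖z‖ ^ 2)) ^ p) ∂(volCn n)) ≤
            ENNReal.ofReal (C * ∑' k, ‖c k‖ ^ p) := by
  classical
  set q : ℝ := p * (α / 2) with hq_def
  have hq : 0 < q := by positivity
  refine ⟨(Real.pi / q) ^ n, by positivity, ?_⟩
  intro c zk hc f hf
  set g : ℕ → EuclideanSpace ℂ (Fin n) → ℂ := fun k z =>
    c k * Complex.exp ((α : ℂ) * (inner ℂ (zk k) z : ℂ) - (α / 2 : ℝ) * ‖zk k‖ ^ 2) with hg_def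
  -- real part of the exponent
  have hre : ∀ k (z : EuclideanSpace ℂ (Fin n)),
      ((α : ℂ) * (inner ℂ (zk k) z : ℂ) - (α / 2 : ℝ) * ‖zk k‖ ^ 2).re
        = α * (inner ℂ (zk k) z : ℂ).re - α / 2 * ‖zk k‖ ^ 2 := by
    intro k z
    simp [Complex.sub_re, Complex.re_ofReal_mul, ← Complex.ofReal_pow]
  have hnorm : ∀ k z, ‖g k z‖
      = ‖c k‖ * Real.exp (α * (inner ℂ (zk k) z : ℂ).re - α / 2 * ‖zk k‖ ^ 2) := by
    intro k z
    rw [hg_def]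
    simp only [norm_mul, Complex.norm_exp, hre]
  have hre_le : ∀ k (z : EuclideanSpace ℂ (Fin n)), (inner ℂ (zk k) z : ℂ).re ≤ ‖zk k‖ * ‖z‖ := by
    intro k z
    exact (Complex.re_le_norm _).trans (by
      exact norm_inner_le_norm (𝕜 := ℂ) _ _)
  have hrebound : ∀ k (z : EuclideanSpace ℂ (Fin n)) (R : ℝ), ‖z‖ ≤ R →
      α * (inner ℂ (zk k) z : ℂ).re - α / 2 * ‖zk k‖ ^ 2 ≤ α * R ^ 2 / 2 := by
    intro k z R hz
    have h1 := hre_le k z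
    have h2 : (inner ℂ (zk k) z : ℂ).re ≤ ‖zk k‖ * R :=
      h1.trans (mul_le_mul_of_nonneg_left hz (norm_nonneg _))
    nlinarith [sq_nonneg (‖zk k‖ - R), norm_nonneg (zk k)]
  have hbound : ∀ (R : ℝ) k z, ‖z‖ ≤ R → ‖g k z‖ ≤ ‖c k‖ * Real.exp (α * R ^ 2 / 2) := by
    intro R k z hz
    rw [hnorm]
    exact mul_le_mul_of_nonneg_left (Real.exp_le_exp.2 (hrebound k z R hz)) (norm_nonneg _)
  -- Summability of the coefficients
  have hc1 : Summable fun k => ‖c k‖ := by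
    refine Summable.of_norm_bounded_eventually hc ?_
    rw [Nat.cofinite_eq_atTop]
    filter_upwards [hc.tendsto_atTop_zero.eventually_le_const one_pos] with k hk
    rw [Real.norm_eq_abs, _root_.abs_of_nonneg (norm_nonneg _)]
    rcases eq_or_lt_of_le (norm_nonneg (c k)) with h | h
    · rw [← h, Real.zero_rpow hp0.ne']
    · have hle1 : ‖c k‖ ≤ 1 := by
        by_contra hgt
        push_neg at hgt
        have h1 : 1 < ‖c k‖ ^ p := (Real.one_lt_rpow_iff (norm_nonneg _)).2 (Or.inl ⟨hgt, hp0⟩)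
        linarith
      calc ‖c k‖ = ‖c k‖ ^ (1 : ℝ) := (Real.rpow_one _).symm
        _ ≤ ‖c k‖ ^ p := Real.rpow_le_rpow_of_exponent_ge h hle1 hp1
  have hsummand : ∀ z, Summable fun k => ‖g k z‖ := by
    intro z
    exact Summable.of_nonneg_of_le (fun _ => norm_nonneg _)
      (fun k => hbound ‖z‖ k z le_rfl) (hc1.mul_right _)
  have hfg : f = fun z => ∑' k, g k z := funext hf
  refine ⟨?_, ?_, ?_⟩
  · -- Locally uniform convergence
    rw [tendstoLocallyUniformly_iff_forall_isCompact]
    intro K hK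
    obtain ⟨R, hR⟩ := hK.isBounded.subset_closedBall 0
    set R' : ℝ := max R 0 with hR'_def
    have hsub : K ⊆ Metric.closedBall 0 R' :=
      hR.trans (Metric.closedBall_subset_closedBall (le_max_left _ _))
    have h := tendstoUniformlyOn_tsum_nat (f := g)
      (hc1.mul_right (Real.exp (α * R' ^ 2 / 2)))
      (s := Metric.closedBall 0 R')
      (fun k z hz => hbound R' k z (by simpa [mem_closedBall_zero_iff] using hz))
    rw [← hfg] at h
    exact h.mono hsub
  · -- Differentiability
    intro z₀
    set R : ℝ := ‖z₀‖ + 1 with hR_def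
    have hRpos : 0 < R := by positivity
    set s : Set (EuclideanSpace ℂ (Fin n)) := Metric.ball 0 R with hs_def
    set L : ℕ → EuclideanSpace ℂ (Fin n) →L[ℂ] ℂ := fun k => (α : ℂ) • (innerSL ℂ (zk k))
      with hL_def
    set F' : ℕ → EuclideanSpace ℂ (Fin n) → EuclideanSpace ℂ (Fin n) →L[ℂ] ℂ := fun k x =>
      (c k * Complex.exp ((α : ℂ) * (inner ℂ (zk k) x : ℂ) - (α / 2 : ℝ) * ‖zk k‖ ^ 2)) • L k
      with hF'_def
    have hderiv : ∀ k x, HasFDerivAt (g k) (F' k x) x := by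
      intro k x
      have h1 : HasFDerivAt (fun z : EuclideanSpace ℂ (Fin n) =>
          ((α : ℂ) * (inner ℂ (zk k) z : ℂ) - ((α / 2 : ℝ) : ℂ) * (‖zk k‖ : ℂ) ^ 2)) (L k) x := by
        have h2 := ((innerSL ℂ (zk k)).hasFDerivAt (x := x)).const_mul (α : ℂ)
        simpa using h2.sub_const (((α / 2 : ℝ) : ℂ) * (‖zk k‖ : ℂ) ^ 2)
      have h3 := (h1.cexp).const_mul (c k)
      rw [hg_def]
      exact h3.congr_fderiv (by rw [hF'_def, smul_smul])
    have hLnorm : ∀ k, ‖L k‖ ≤ α * ‖zk k‖ := by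
      intro k
      have h0 : ‖(α : ℂ) • innerSL ℂ (zk k)‖ = ‖(α : ℂ)‖ * ‖innerSL ℂ (zk k)‖ :=
        norm_smul ((α : ℂ)) (innerSL ℂ (zk k))
      rw [innerSL_apply_norm, Complex.norm_real, Real.norm_eq_abs, _root_.abs_of_pos hα] at h0
      exact h0.le
    have hF'bound : ∀ k x, x ∈ s →
        ‖F' k x‖ ≤ ‖c k‖ * (α * ((R + 1 + 2 / α) * Real.exp (α * R ^ 2 / 2))) := by
      intro k x hx
      have hxR : ‖x‖ ≤ R := (mem_ball_zero_iff.1 hx).le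
      have h1 : ‖F' k x‖ = ‖g k x‖ * ‖L k‖ := norm_smul (g k x) (L k)
      rw [h1, hnorm]
      have h2 : Real.exp (α * (inner ℂ (zk k) x : ℂ).re - α / 2 * ‖zk k‖ ^ 2)
          ≤ Real.exp (α * R * ‖zk k‖ - α / 2 * ‖zk k‖ ^ 2) := by
        apply Real.exp_le_exp.2
        have h4 : (inner ℂ (zk k) x : ℂ).re ≤ ‖zk k‖ * R :=
          (hre_le k x).trans (mul_le_mul_of_nonneg_left hxR (norm_nonneg _))
        have h5 := mul_le_mul_of_nonneg_left h4 hα.le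
        calc α * (inner ℂ (zk k) x : ℂ).re - α / 2 * ‖zk k‖ ^ 2
            ≤ α * (‖zk k‖ * R) - α / 2 * ‖zk k‖ ^ 2 := sub_le_sub_right h5 _
          _ = α * R * ‖zk k‖ - α / 2 * ‖zk k‖ ^ 2 := by ring
      have h3 : ‖zk k‖ * Real.exp (α * R * ‖zk k‖ - α / 2 * ‖zk k‖ ^ 2)
          ≤ (R + 1 + 2 / α) * Real.exp (α * R ^ 2 / 2) :=
        aux_deriv_bound α R ‖zk k‖ hα hRpos.le (norm_nonneg _)
      calc ‖c k‖ * Real.exp (α * (inner ℂ (zk k) x : ℂ).re - α / 2 * ‖zk k‖ ^ 2) * ‖L k‖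
          ≤ ‖c k‖ * Real.exp (α * R * ‖zk k‖ - α / 2 * ‖zk k‖ ^ 2) * (α * ‖zk k‖) := by
            apply mul_le_mul
            · exact mul_le_mul_of_nonneg_left h2 (norm_nonneg _)
            · exact hLnorm k
            · exact norm_nonneg _
            · positivity
        _ = ‖c k‖ * (α * (‖zk k‖ * Real.exp (α * R * ‖zk k‖ - α / 2 * ‖zk k‖ ^ 2))) := by ring
        _ ≤ ‖c k‖ * (α * ((R + 1 + 2 / α) * Real.exp (α * R ^ 2 / 2))) := by
            apply mul_le_mul_of_nonneg_left _ (norm_nonneg _)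
            exact mul_le_mul_of_nonneg_left h3 hα.le
    have hsum0 : Summable fun k => g k 0 := (hsummand 0).of_norm
    have H := hasFDerivAt_tsum_of_isPreconnected
      (hc1.mul_right (α * ((R + 1 + 2 / α) * Real.exp (α * R ^ 2 / 2))))
      Metric.isOpen_ball ((convex_ball (0 : EuclideanSpace ℂ (Fin n)) R).isPreconnected)
      (fun k x _ => hderiv k x) (fun k x hx => hF'bound k x hx)
      (Metric.mem_ball_self hRpos) hsum0
      (mem_ball_zero_iff.2 (by rw [hR_def]; linarith))
    rw [hfg]
    exact H.differentiableAt
  · -- The integral estimate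
    have hkey : ∀ k z, ‖g k z‖ * Real.exp (-(α / 2) * ‖z‖ ^ 2)
        = ‖c k‖ * Real.exp (-(α / 2) * ‖z - zk k‖ ^ 2) := by
      intro k z
      rw [hnorm, mul_assoc, ← Real.exp_add]
      congr 1
      have hns := norm_sub_sq (𝕜 := ℂ) z (zk k)
      simp only [RCLike.re_to_complex] at hns
      have hsym : (inner ℂ z (zk k) : ℂ).re = (inner ℂ (zk k) z : ℂ).re := by
        have := inner_re_symm (𝕜 := ℂ) z (zk k)
        simpa [RCLike.re_to_complex] using this
      rw [hsym] at hns
      exact congrArg Real.exp (by linear_combination (α / 2) * hns)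
    have hgauss_le_one : ∀ (k : ℕ) (z : EuclideanSpace ℂ (Fin n)),
        Real.exp (-(α / 2) * ‖z - zk k‖ ^ 2) ≤ 1 := by
      intro k z
      rw [Real.exp_le_one_iff]
      nlinarith [sq_nonneg ‖z - zk k‖]
    have hsa : ∀ z, Summable fun k => ‖c k‖ * Real.exp (-(α / 2) * ‖z - zk k‖ ^ 2) := by
      intro z
      refine Summable.of_nonneg_of_le (fun k => by positivity) (fun k => ?_) hc1
      calc ‖c k‖ * Real.exp (-(α / 2) * ‖z - zk k‖ ^ 2) ≤ ‖c k‖ * 1 :=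
            mul_le_mul_of_nonneg_left (hgauss_le_one k z) (norm_nonneg _)
        _ = ‖c k‖ := mul_one _
    have h5 : ∀ k z, (‖c k‖ * Real.exp (-(α / 2) * ‖z - zk k‖ ^ 2)) ^ p
        = ‖c k‖ ^ p * Real.exp (-q * ‖z - zk k‖ ^ 2) := by
      intro k z
      rw [Real.mul_rpow (norm_nonneg _) (Real.exp_pos _).le, ← Real.exp_mul]
      congr 2
      rw [hq_def]; ring
    have hsp : ∀ z, Summable fun k => (‖c k‖ * Real.exp (-(α / 2) * ‖z - zk k‖ ^ 2)) ^ p := by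
      intro z
      refine Summable.of_nonneg_of_le (fun k => Real.rpow_nonneg (by positivity) _)
        (fun k => ?_) hc
      rw [h5 k z]
      calc ‖c k‖ ^ p * Real.exp (-q * ‖z - zk k‖ ^ 2) ≤ ‖c k‖ ^ p * 1 := by
            apply mul_le_mul_of_nonneg_left _ (Real.rpow_nonneg (norm_nonneg _) _)
            rw [Real.exp_le_one_iff]
            nlinarith [sq_nonneg ‖z - zk k‖]
        _ = ‖c k‖ ^ p := mul_one _
    have hptw : ∀ z, (‖f z‖ * Real.exp (-(α / 2) * ‖z‖ ^ 2)) ^ p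
        ≤ ∑' k, ‖c k‖ ^ p * Real.exp (-q * ‖z - zk k‖ ^ 2) := by
      intro z
      have h1 : ‖f z‖ ≤ ∑' k, ‖g k z‖ := by
        rw [hf z]
        exact norm_tsum_le_tsum_norm (hsummand z)
      have h2 : ‖f z‖ * Real.exp (-(α / 2) * ‖z‖ ^ 2)
          ≤ ∑' k, ‖c k‖ * Real.exp (-(α / 2) * ‖z - zk k‖ ^ 2) := by
        calc ‖f z‖ * Real.exp (-(α / 2) * ‖z‖ ^ 2)
            ≤ (∑' k, ‖g k z‖) * Real.exp (-(α / 2) * ‖z‖ ^ 2) :=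
              mul_le_mul_of_nonneg_right h1 (Real.exp_pos _).le
          _ = ∑' k, ‖g k z‖ * Real.exp (-(α / 2) * ‖z‖ ^ 2) := by
              rw [tsum_mul_right]
          _ = ∑' k, ‖c k‖ * Real.exp (-(α / 2) * ‖z - zk k‖ ^ 2) :=
              tsum_congr fun k => hkey k z
      have h3 : (‖f z‖ * Real.exp (-(α / 2) * ‖z‖ ^ 2)) ^ p
          ≤ (∑' k, ‖c k‖ * Real.exp (-(α / 2) * ‖z - zk k‖ ^ 2)) ^ p :=
        Real.rpow_le_rpow (by positivity) h2 hp0.le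
      refine h3.trans ?_
      have h4 := aux_tsum_rpow_le hp0 hp1 _ (fun k => by positivity) (hsa z) (hsp z)
      refine h4.trans_eq (tsum_congr fun k => h5 k z)
    -- pass to the lintegral
    have hmeas_k : ∀ k, Measurable fun z : EuclideanSpace ℂ (Fin n) =>
        ENNReal.ofReal (‖c k‖ ^ p * Real.exp (-q * ‖z - zk k‖ ^ 2)) := by
      intro k
      apply ENNReal.measurable_ofReal.comp
      exact (continuous_const.mul (Real.continuous_exp.comp
        (continuous_const.mul ((continuous_id.sub continuous_const).norm.pow 2)))).measurable
    calc (∫⁻ z, ENNReal.ofReal ((‖f z‖ * Real.exp (-(α / 2) * ‖z‖ ^ 2)) ^ p) ∂(volCn n))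
        ≤ ∫⁻ z, ENNReal.ofReal (∑' k, ‖c k‖ ^ p * Real.exp (-q * ‖z - zk k‖ ^ 2)) ∂(volCn n) :=
          lintegral_mono fun z => ENNReal.ofReal_le_ofReal (hptw z)
      _ = ∫⁻ z, ∑' k, ENNReal.ofReal (‖c k‖ ^ p * Real.exp (-q * ‖z - zk k‖ ^ 2)) ∂(volCn n) := by
          apply lintegral_congr
          intro z
          rw [ENNReal.ofReal_tsum_of_nonneg (fun k => by positivity)]
          have := hsp z
          exact this.congr fun k => h5 k z
      _ = ∑' k, ∫⁻ z, ENNReal.ofReal (‖c k‖ ^ p * Real.exp (-q * ‖z - zk k‖ ^ 2)) ∂(volCn n) :=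
          lintegral_tsum fun k => (hmeas_k k).aemeasurable
      _ = ∑' k, ENNReal.ofReal (‖c k‖ ^ p) * ENNReal.ofReal ((Real.pi / q) ^ n) := by
          apply tsum_congr
          intro k
          have heq : ∀ z : EuclideanSpace ℂ (Fin n),
              ENNReal.ofReal (‖c k‖ ^ p * Real.exp (-q * ‖z - zk k‖ ^ 2))
                = ENNReal.ofReal (‖c k‖ ^ p) * ENNReal.ofReal (Real.exp (-q * ‖z - zk k‖ ^ 2)) :=
            fun z => ENNReal.ofReal_mul (Real.rpow_nonneg (norm_nonneg _) _)
          simp_rw [heq]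
          rw [lintegral_const_mul _ (by
            exact ENNReal.measurable_ofReal.comp (Real.continuous_exp.comp
              (continuous_const.mul
                ((continuous_id.sub continuous_const).norm.pow 2))).measurable)]
          rw [aux_gaussN n q hq (zk k)]
      _ = ENNReal.ofReal ((Real.pi / q) ^ n * ∑' k, ‖c k‖ ^ p) := by
          rw [ENNReal.tsum_mul_right,
            ← ENNReal.ofReal_tsum_of_nonneg (fun k => Real.rpow_nonneg (norm_nonneg _) _) hc,
            ← ENNReal.ofReal_mul (tsum_nonneg fun k => Real.rpow_nonneg (norm_nonneg _) _)]
          rw [mul_comm]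
      _ ≤ ENNReal.ofReal ((Real.pi / q) ^ n * ∑' k, ‖c k‖ ^ p) := le_rfl
end

section
/- If t ≤ 1, Theorem B fails in the following strong sense: every function f of the form f(z) = ∫_D (z-w)/(1-z·conj(w)) dμ(w) with μ a finite complex Borel measure is bounded on D; but there exist positive Borel measures ν on D that are t-Carleson with ν(D) = ∞ for every 0 < t ≤ 1. Concretely, the measure dν(z) = (1-|z|²)^{t-2} dA(z) satisfies ν(D(z,r)) ≤ C(1-|z|²)^t for all z ∈ D yet ν(D) = ∞. -/
open MeasureTheory Complex
open scoped ENNReal NNReal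

lemma key_id (z w : ℂ) : ‖1 - z * (starRingEnd ℂ) w‖^2 - ‖z - w‖^2 = (1-‖z‖^2)*(1-‖w‖^2) := by
  have h : ∀ a : ℂ, ‖a‖^2 = Complex.normSq a := fun a => by
    rw [Complex.sq_norm]
  simp only [h, Complex.normSq_apply, Complex.sub_re, Complex.sub_im, Complex.mul_re,
    Complex.mul_im, Complex.one_re, Complex.one_im, Complex.conj_re, Complex.conj_im]
  ring

lemma kernel_bd {z w : ℂ} (hz : ‖z‖ < 1) (hw : ‖w‖ < 1) :
    ‖(z - w) / (1 - z * (starRingEnd ℂ) w)‖ ≤ 1 := by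
  have h := key_id z w
  have hz2 : ‖z‖^2 < 1 := by nlinarith [norm_nonneg z]
  have hw2 : ‖w‖^2 < 1 := by nlinarith [norm_nonneg w]
  have h1 : 0 < (1-‖z‖^2)*(1-‖w‖^2) := mul_pos (by linarith) (by linarith)
  have h2 : ‖z - w‖^2 < ‖1 - z * (starRingEnd ℂ) w‖^2 := by linarith
  have h3 : ‖z - w‖ ≤ ‖1 - z * (starRingEnd ℂ) w‖ := by
    nlinarith [norm_nonneg (z-w), norm_nonneg (1 - z * (starRingEnd ℂ) w)]
  have h4 : 0 < ‖1 - z * (starRingEnd ℂ) w‖ := by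
    nlinarith [norm_nonneg (z-w), norm_nonneg (1 - z * (starRingEnd ℂ) w)]
  rw [norm_div, div_le_one h4]
  exact h3

lemma areaM_ball (c : ℂ) {s : ℝ} (hs : 0 ≤ s) :
    areaM (Metric.ball c s) = ENNReal.ofReal (s^2) := by
  have hπ : (0:ℝ) < Real.pi := Real.pi_pos
  have hpi : ((NNReal.pi : ℝ≥0∞)) = ENNReal.ofReal Real.pi := by
    rw [← NNReal.coe_real_pi, ENNReal.ofReal_coe_nnreal]
  rw [areaM, Measure.smul_apply, Complex.volume_ball, smul_eq_mul, hpi,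
    ← ENNReal.ofReal_pow hs, mul_comm (ENNReal.ofReal (s^2)), ← mul_assoc,
    ENNReal.inv_mul_cancel (ENNReal.ofReal_pos.mpr hπ).ne' ENNReal.ofReal_ne_top, one_mul]

set_option maxHeartbeats 1000000 in
theorem stmt15 (r : ℝ) (hr0 : 0 < r) (hr1 : r < 1) :
    ((∀ (ν : Measure ℂ), ν unitDiskᶜ = 0 → IsFiniteMeasure ν →
        ∀ g : ℂ → ℂ, Measurable g → (∀ w, ‖g w‖ ≤ 1) →
          ∀ f : ℂ → ℂ,
            (∀ z ∈ unitDisk,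
              f z = ∫ w, ((z - w) / (1 - z * (starRingEnd ℂ) w)) * g w ∂ν) →
            ∃ M : ℝ, ∀ z ∈ unitDisk, ‖f z‖ ≤ M)) ∧
    (∀ t : ℝ, 0 < t → t ≤ 1 →
      ∀ ν : Measure ℂ,
        ν = (areaM.restrict unitDisk).withDensity
              (fun z => ENNReal.ofReal ((1 - ‖z‖ ^ 2) ^ (t - 2))) →
        (∃ C : ℝ, 0 < C ∧
            ∀ z ∈ unitDisk, ν (pDisk z r) ≤ ENNReal.ofReal (C * (1 - ‖z‖ ^ 2) ^ t)) ∧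
          ν unitDisk = ⊤) := by
  constructor
  · -- Part 1: boundedness
    intro ν hc hfin g hg hgb f hf
    refine ⟨(ν Set.univ).toReal, fun z hz => ?_⟩
    rw [hf z hz]
    have hae : ∀ᵐ w ∂ν, ‖((z - w) / (1 - z * (starRingEnd ℂ) w)) * g w‖ ≤ 1 := by
      have hmem : ∀ᵐ w ∂ν, w ∈ unitDisk := by
        rw [ae_iff]
        exact hc
      filter_upwards [hmem] with w hw
      rw [norm_mul]
      calc ‖(z - w) / (1 - z * (starRingEnd ℂ) w)‖ * ‖g w‖ ≤ 1 * 1 :=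
        mul_le_mul (kernel_bd hz hw) (hgb w) (norm_nonneg _) zero_le_one
      _ = 1 := by ring
    calc ‖∫ w, ((z - w) / (1 - z * (starRingEnd ℂ) w)) * g w ∂ν‖
        ≤ 1 * (ν Set.univ).toReal := norm_integral_le_of_norm_le_const hae
      _ = (ν Set.univ).toReal := one_mul _
  · -- Part 2
    intro t ht0 ht1 ν hν
    subst hν
    have hUD : unitDisk = Metric.ball (0:ℂ) 1 := by
      ext w; simp [unitDisk, Metric.mem_ball]
    have hUDm : MeasurableSet unitDisk := hUD ▸ measurableSet_ball
    have ht2 : t - 2 ≤ -1 := by linarith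
    constructor
    · -- Carleson bound
      have hκ : 0 < (1 - r^2)/4 := by nlinarith
      refine ⟨((1 - r^2)/4)^(t-2) * (r/(1-r))^2, mul_pos (Real.rpow_pos_of_pos hκ _)
        (pow_pos (div_pos hr0 (by linarith)) 2), ?_⟩
      intro z hz
      have hz1 : ‖z‖ < 1 := hz
      set d := 1 - ‖z‖^2 with hd_def
      have hd : 0 < d := by rw [hd_def]; nlinarith [norm_nonneg z]
      have hmeas : MeasurableSet (pDisk z r) := by
        have h1 : Measurable fun w : ℂ => ‖(z - w) / (1 - z * (starRingEnd ℂ) w)‖ :=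
          ((measurable_const.sub measurable_id).div
            (measurable_const.sub (measurable_const.mul Complex.continuous_conj.measurable))).norm
        exact hUDm.inter (measurableSet_lt h1 measurable_const)
      have hsub : pDisk z r ⊆ unitDisk := fun w hw => hw.1
      -- key estimates on pDisk
      have hkey : ∀ w ∈ pDisk z r, (1 - r^2)/4 * d ≤ 1 - ‖w‖^2 ∧ ‖z - w‖ < r * d / (1-r) := by
        rintro w ⟨hwD, hwr⟩
        have hw1 : ‖w‖ < 1 := hwD
        have hw2 : ‖w‖^2 < 1 := by nlinarith [norm_nonneg w]
        set q := 1 - z * (starRingEnd ℂ) w with hq_def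
        have hid := key_id z w
        have hq2 : ‖q‖^2 = ‖z-w‖^2 + d*(1-‖w‖^2) := by rw [hq_def, hd_def]; linarith
        have hqpos : 0 < ‖q‖ := by
          have hq2pos : 0 < ‖q‖^2 := by nlinarith [sq_nonneg ‖z-w‖]
          nlinarith [norm_nonneg q]
        rw [norm_div, div_lt_iff₀ hqpos] at hwr
        have hzw2 : ‖z-w‖^2 < r^2 * ‖q‖^2 := by nlinarith [norm_nonneg (z-w)]
        -- lower bound on ‖q‖
        have hql : d/2 ≤ ‖q‖ := by
          have h5 : ‖(1:ℂ)‖ - ‖z * (starRingEnd ℂ) w‖ ≤ ‖q‖ := norm_sub_norm_le _ _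
          rw [norm_one, norm_mul, RCLike.norm_conj] at h5
          nlinarith [norm_nonneg z, norm_nonneg w]
        have hrr : (0:ℝ) < 1 - r^2 := by nlinarith
        constructor
        · have h6 : (d/2)^2 ≤ ‖q‖^2 := by nlinarith [hql, hd]
          have h7 : (1-r^2) * (d/2)^2 ≤ (1-r^2) * ‖q‖^2 :=
            mul_le_mul_of_nonneg_left h6 hrr.le
          have h8 : (1-r^2) * ‖q‖^2 ≤ d * (1-‖w‖^2) := by nlinarith [hq2, hzw2]
          nlinarith [h7, h8, hd, mul_pos hd hd]
        · -- Euclidean bound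
          have he : 1 - z * (starRingEnd ℂ) z = (d : ℂ) := by
            rw [Complex.mul_conj, hd_def]
            push_cast [Complex.normSq_eq_norm_sq]
            ring
          have hqu : ‖q‖ ≤ d + ‖z - w‖ := by
            have hsplit : q = (1 - z * (starRingEnd ℂ) z) + z * ((starRingEnd ℂ) z - (starRingEnd ℂ) w) := by
              rw [hq_def]; ring
            rw [hsplit, he]
            calc ‖(d:ℂ) + z * ((starRingEnd ℂ) z - (starRingEnd ℂ) w)‖
                ≤ ‖(d:ℂ)‖ + ‖z * ((starRingEnd ℂ) z - (starRingEnd ℂ) w)‖ := norm_add_le _ _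
              _ = d + ‖z‖ * ‖z - w‖ := by
                  rw [norm_mul, ← map_sub, RCLike.norm_conj, Complex.norm_real,
                    Real.norm_eq_abs, abs_of_pos hd]
              _ ≤ d + ‖z - w‖ := by nlinarith [norm_nonneg (z-w), norm_nonneg z]
          rw [lt_div_iff₀ (by linarith : (0:ℝ) < 1 - r)]
          have h9 : r * ‖q‖ ≤ r * (d + ‖z - w‖) := mul_le_mul_of_nonneg_left hqu hr0.le
          nlinarith [hwr, h9]
      calc ((areaM.restrict unitDisk).withDensity
              (fun w => ENNReal.ofReal ((1 - ‖w‖ ^ 2) ^ (t - 2)))) (pDisk z r)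
          = ∫⁻ w in pDisk z r, ENNReal.ofReal ((1 - ‖w‖ ^ 2) ^ (t - 2))
              ∂(areaM.restrict unitDisk) := withDensity_apply _ hmeas
        _ = ∫⁻ w in pDisk z r, ENNReal.ofReal ((1 - ‖w‖ ^ 2) ^ (t - 2)) ∂areaM := by
            rw [Measure.restrict_restrict hmeas, Set.inter_eq_self_of_subset_left hsub]
        _ ≤ ∫⁻ _ in pDisk z r, ENNReal.ofReal (((1 - r^2)/4*d)^(t-2)) ∂areaM := by
            refine setLIntegral_mono measurable_const fun w hw => ?_
            exact ENNReal.ofReal_le_ofReal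
              (Real.rpow_le_rpow_of_nonpos (mul_pos hκ hd) (hkey w hw).1 (by linarith))
        _ = ENNReal.ofReal (((1 - r^2)/4*d)^(t-2)) * areaM (pDisk z r) := setLIntegral_const _ _
        _ ≤ ENNReal.ofReal (((1 - r^2)/4*d)^(t-2)) * areaM (Metric.ball z (r*d/(1-r))) := by
            refine mul_le_mul_right (measure_mono fun w hw => ?_) _
            rw [Metric.mem_ball, dist_eq_norm, ← norm_sub_rev]
            exact (hkey w hw).2
        _ = ENNReal.ofReal (((1 - r^2)/4*d)^(t-2)) * ENNReal.ofReal ((r*d/(1-r))^2) := by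
            rw [areaM_ball _ (div_nonneg (mul_nonneg hr0.le hd.le) (by linarith))]
        _ = ENNReal.ofReal ((((1 - r^2)/4)^(t-2) * (r/(1-r))^2) * d^t) := by
            rw [← ENNReal.ofReal_mul (by positivity)]
            congr 1
            rw [Real.mul_rpow hκ.le hd.le]
            have hdt : d^(t-2) * d^(2:ℕ) = d^t := by
              rw [← Real.rpow_natCast d 2, ← Real.rpow_add hd]; norm_num
            have hr2 : (r*d/(1-r))^2 = (r/(1-r))^2 * d^(2:ℕ) := by ring
            rw [hr2, ← hdt]; ring
    · -- infinite mass
      set b : ℕ → ℝ := fun n => 1 - (1/2:ℝ)^n with hb_def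
      have hbmono : ∀ m n : ℕ, m ≤ n → b m ≤ b n := by
        intro m n h
        have := pow_le_pow_of_le_one (by norm_num : (0:ℝ) ≤ 1/2) (by norm_num) h
        simp only [hb_def]; linarith
      have hblt1 : ∀ n, b n < 1 := by
        intro n
        have : (0:ℝ) < (1/2)^n := by positivity
        simp only [hb_def]; linarith
      have hb0 : ∀ n, 0 ≤ b n := by
        intro n
        have : (1/2:ℝ)^n ≤ 1 := pow_le_one₀ (by norm_num) (by norm_num)
        simp only [hb_def]; linarith
      have hbval : ∀ n, b n = 1 - (1/2:ℝ)^n := fun n => by simp only [hb_def]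
      clear_value b
      set A : ℕ → Set ℂ := fun n => Metric.ball 0 (b (n+2)) \ Metric.ball 0 (b (n+1)) with hA_def
      have hAm : ∀ n, MeasurableSet (A n) := fun n => measurableSet_ball.diff measurableSet_ball
      have hmem : ∀ n w, w ∈ A n → b (n+1) ≤ ‖w‖ ∧ ‖w‖ < b (n+2) := by
        intro n w hw
        simp only [hA_def] at hw
        obtain ⟨h1, h2⟩ := hw
        rw [Metric.mem_ball, dist_zero_right] at h1 h2
        exact ⟨not_lt.mp h2, h1⟩
      have hAdiff : ∀ n, A n = Metric.ball 0 (b (n+2)) \ Metric.ball 0 (b (n+1)) :=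
        fun n => by simp only [hA_def]
      clear_value A
      have hsubU : ∀ n, A n ⊆ unitDisk := by
        intro n w hw
        have h1 := (hmem n w hw).2
        have h2 := hblt1 (n+2)
        show ‖w‖ < 1
        linarith
      have hdisj : Pairwise (Function.onFun Disjoint A) := by
        have hlt : ∀ m n : ℕ, m < n → Disjoint (A m) (A n) := by
          intro m n h
          rw [Set.disjoint_left]
          intro w hwm hwn
          have h1 := (hmem m w hwm).2
          have h2 := (hmem n w hwn).1
          have h3 : b (m+2) ≤ b (n+1) := hbmono _ _ (by omega)
          linarith
        intro m n hmn
        rcases hmn.lt_or_gt with h | h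
        · exact hlt _ _ h
        · exact (hlt _ _ h).symm
      set ν := (areaM.restrict unitDisk).withDensity
          (fun w => ENNReal.ofReal ((1 - ‖w‖ ^ 2) ^ (t - 2))) with hν_def
      clear_value ν
      have hAν : ∀ n, ENNReal.ofReal (1/8) ≤ ν (A n) := by
        intro n
        have hx : (0:ℝ) < (1/2:ℝ)^n := by positivity
        have hx1 : ((1/2:ℝ))^n ≤ 1 := pow_le_one₀ (by norm_num) (by norm_num)
        have hb1 : b (n+1) = 1 - (1/2:ℝ)^n/2 := by rw [hbval]; rw [pow_succ]; ring_nf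
        have hb2 : b (n+2) = 1 - (1/2:ℝ)^n/4 := by
          rw [hbval]; rw [pow_succ, pow_succ]; ring_nf
        have hdens : ∀ w ∈ A n,
            ENNReal.ofReal (((1/2:ℝ)^n)⁻¹) ≤ ENNReal.ofReal ((1 - ‖w‖ ^ 2) ^ (t - 2)) := by
          intro w hw
          obtain ⟨hwl, hwu⟩ := hmem n w hw
          have hwn : ‖w‖ < 1 := lt_trans hwu (hblt1 _)
          have hw0 : 0 ≤ ‖w‖ := norm_nonneg w
          rw [hb1] at hwl
          have hub : 1 - ‖w‖^2 ≤ (1/2:ℝ)^n := by nlinarith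
          have hpos : 0 < 1 - ‖w‖^2 := by nlinarith
          apply ENNReal.ofReal_le_ofReal
          calc ((1/2:ℝ)^n)⁻¹ = ((1/2:ℝ)^n)^(-1:ℝ) := (Real.rpow_neg_one _).symm
            _ ≤ ((1/2:ℝ)^n)^(t-2) := Real.rpow_le_rpow_of_exponent_ge hx hx1 ht2
            _ ≤ (1 - ‖w‖^2)^(t-2) := Real.rpow_le_rpow_of_nonpos hpos hub (by linarith)
        have harea : ENNReal.ofReal ((1/2:ℝ)^n/8) ≤ areaM (A n) := by
          have hsubball : Metric.ball (0:ℂ) (b (n+1)) ⊆ Metric.ball 0 (b (n+2)) :=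
            Metric.ball_subset_ball (hbmono _ _ (by omega))
          rw [hAdiff n, measure_diff hsubball measurableSet_ball.nullMeasurableSet
            (by rw [areaM_ball _ (hb0 _)]; exact ENNReal.ofReal_ne_top)]
          rw [areaM_ball _ (hb0 _), areaM_ball _ (hb0 _),
            ← ENNReal.ofReal_sub _ (by positivity)]
          apply ENNReal.ofReal_le_ofReal
          rw [hb1, hb2]
          nlinarith
        calc ENNReal.ofReal (1/8)
            = ENNReal.ofReal (((1/2:ℝ)^n)⁻¹ * ((1/2:ℝ)^n/8)) := by
              congr 1; field_simp
          _ = ENNReal.ofReal (((1/2:ℝ)^n)⁻¹) * ENNReal.ofReal ((1/2:ℝ)^n/8) :=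
              ENNReal.ofReal_mul (by positivity)
          _ ≤ ENNReal.ofReal (((1/2:ℝ)^n)⁻¹) * areaM (A n) := mul_le_mul_right harea _
          _ = ∫⁻ _ in A n, ENNReal.ofReal (((1/2:ℝ)^n)⁻¹) ∂areaM := (setLIntegral_const _ _).symm
          _ ≤ ∫⁻ w in A n, ENNReal.ofReal ((1 - ‖w‖ ^ 2) ^ (t - 2)) ∂areaM :=
              setLIntegral_mono' (hAm n) hdens
          _ = ∫⁻ w in A n, ENNReal.ofReal ((1 - ‖w‖ ^ 2) ^ (t - 2))
              ∂(areaM.restrict unitDisk) := by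
              rw [Measure.restrict_restrict (hAm n),
                Set.inter_eq_self_of_subset_left (hsubU n)]
          _ = ν (A n) := by rw [hν_def]; exact (withDensity_apply _ (hAm n)).symm
      have hge : ∑' n, ν (A n) ≤ ν unitDisk := by
        rw [← measure_iUnion hdisj hAm]
        exact measure_mono (Set.iUnion_subset hsubU)
      have htop : (⊤:ℝ≥0∞) ≤ ∑' n, ν (A n) := by
        calc (⊤:ℝ≥0∞) = ∑' (_ : ℕ), ENNReal.ofReal (1/8) :=
            (ENNReal.tsum_const_eq_top_of_ne_zero
              (ENNReal.ofReal_pos.mpr (by norm_num)).ne').symm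
          _ ≤ _ := ENNReal.tsum_le_tsum hAν
      exact top_le_iff.mp (le_trans htop hge)
end
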